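/- Let 0<p<1 and let j, n be natural numbers. The j-fold convolution power μ_p^{∗j} of the logarithmic distribution (the distribution of the sum of j i.i.d. Log(p) random variables, with μ_p^{∗0} the Dirac mass at 0) satisfies μ_p^{∗j}({n}) = F(n,j)·p^n·j!/(−ln(1−p))^j. -/
import Mathlib


open MeasureTheory

/-- Normalized unsigned Stirling numbers of the first kind:
`F 0 0 = 1`, `F n 0 = 0` for `n > 0`, `F n j = 0` for `j > n`, and
`F (n+1) j = (n/(n+1)) * F n j + (1/(n+1)) * F n (j-1)`. -/
noncomputable def F : ℕ → ℕ → ℝ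
  | 0, 0 => 1
  | 0, _ + 1 => 0
  | _ + 1, 0 => 0
  | n + 1, j + 1 => ((n : ℝ) / (n + 1)) * F n (j + 1) + (1 / ((n : ℝ) + 1)) * F n j

lemma F_zero_right (n : ℕ) : F n 0 = if n = 0 then 1 else 0 := by
  cases n <;> simp [F]

lemma F_rec (n j : ℕ) :
    F (n + 1) (j + 1) = ((n : ℝ) / (n + 1)) * F n (j + 1) + (1 / ((n : ℝ) + 1)) * F n j := by
  simp [F]

lemma F_nonneg (n j : ℕ) : 0 ≤ F n j := by
  induction n generalizing j with
  | zero => cases j <;> simp [F]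
  | succ n ih =>
    cases j with
    | zero => simp [F]
    | succ j =>
      rw [F_rec]
      have h1 := ih (j+1)
      have h2 := ih j
      have h3 : (0:ℝ) ≤ (n : ℝ) / (n + 1) := by positivity
      have h4 : (0:ℝ) ≤ 1 / ((n : ℝ) + 1) := by positivity
      nlinarith

lemma FA (n j : ℕ) : (n : ℝ) * F n (j + 1) = ∑ m ∈ Finset.range n, F m j := by
  induction n with
  | zero => simp
  | succ n ih =>
    rw [Finset.sum_range_succ, ← ih, F_rec]
    have h : ((n : ℝ) + 1) ≠ 0 := by positivity
    push_cast
    field_simp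

lemma sum_swap_aux (n : ℕ) (g : ℕ → ℕ → ℝ) :
    ∑ k ∈ Finset.Icc 1 (n + 1), ∑ i ∈ Finset.range (n + 1 - k), g i k
      = ∑ m ∈ Finset.range (n + 1), ∑ k ∈ Finset.Icc 1 m, g (m - k) k := by
  rw [Finset.sum_sigma', Finset.sum_sigma']
  refine Finset.sum_nbij' (fun x => ⟨x.2 + x.1, x.1⟩) (fun x => ⟨x.2, x.1 - x.2⟩) ?_ ?_ ?_ ?_ ?_
  · rintro ⟨k, i⟩ h
    simp only [Finset.mem_sigma, Finset.mem_Icc, Finset.mem_range] at h ⊢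
    omega
  · rintro ⟨m, k⟩ h
    simp only [Finset.mem_sigma, Finset.mem_Icc, Finset.mem_range] at h ⊢
    omega
  · rintro ⟨k, i⟩ h
    simp
  · rintro ⟨m, k⟩ h
    simp only [Finset.mem_sigma, Finset.mem_Icc, Finset.mem_range] at h
    simp only [Sigma.mk.inj_iff, heq_eq_eq, and_true]
    omega
  · rintro ⟨k, i⟩ h
    simp

lemma FC (j n : ℕ) :
    ((j : ℝ) + 1) * F n (j + 1) = ∑ k ∈ Finset.Icc 1 n, F (n - k) j / k := by
  induction j generalizing n with
  | zero =>
    cases n with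
    | zero => simp [F]
    | succ n =>
      have hn1 : (0:ℝ) < (n:ℝ) + 1 := by positivity
      have hF1 : ((n:ℝ) + 1) * F (n + 1) 1 = 1 := by
        rw [show (1:ℕ) = 0 + 1 from rfl] at *
        rw [show ((n:ℝ) + 1) = ((n+1 : ℕ) : ℝ) by push_cast; ring, FA]
        rw [Finset.sum_eq_single 0]
        · simp [F_zero_right]
        · intro m _ hm; simp [F_zero_right, hm]
        · simp
      have : ∑ k ∈ Finset.Icc 1 (n + 1), F (n + 1 - k) 0 / k
          = ∑ k ∈ Finset.Icc 1 (n + 1), (if k = n + 1 then 1 / ((n:ℝ)+1) else 0) := by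
        refine Finset.sum_congr rfl ?_
        intro k hk
        simp only [Finset.mem_Icc] at hk
        rw [F_zero_right]
        by_cases h : k = n + 1
        · subst h; simp
        · have : n + 1 - k ≠ 0 := by omega
          simp [this, h]
      rw [this, Finset.sum_ite_eq' (Finset.Icc 1 (n+1)) (n+1)]
      simp only [Finset.mem_Icc, le_refl, and_true]
      rw [if_pos (by omega)]
      rw [Nat.cast_zero, zero_add, one_mul]
      field_simp at hF1 ⊢
      linarith
  | succ j ih =>
    cases n with
    | zero => simp [F]
    | succ n =>
      have hn1 : ((n:ℝ) + 1) ≠ 0 := by positivity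
      -- multiply both sides by (n+1)
      have key : ((n:ℝ) + 1) * (((j:ℝ) + 1 + 1) * F (n + 1) (j + 1 + 1))
          = ((n:ℝ) + 1) * ∑ k ∈ Finset.Icc 1 (n + 1), F (n + 1 - k) (j + 1) / k := by
        have hA : ((n:ℝ) + 1) * F (n+1) (j+1+1) = ∑ m ∈ Finset.range (n+1), F m (j+1) := by
          have := FA (n+1) (j+1)
          push_cast at this
          linarith [this]
        -- RHS expansion
        have hsplit : ∀ k ∈ Finset.Icc 1 (n+1),
            ((n:ℝ) + 1) * (F (n + 1 - k) (j + 1) / k)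
              = F (n + 1 - k) (j + 1)
                + (∑ i ∈ Finset.range (n + 1 - k), F i j) / k := by
          intro k hk
          simp only [Finset.mem_Icc] at hk
          have hk0 : (0:ℝ) < (k:ℝ) := by exact_mod_cast hk.1
          have hsub : ((n + 1 - k : ℕ) : ℝ) = (n:ℝ) + 1 - (k:ℝ) := by
            have := hk.2; push_cast [Nat.cast_sub (by omega : k ≤ n+1)]; ring
          have hA2 : ((n + 1 - k : ℕ) : ℝ) * F (n + 1 - k) (j + 1)
              = ∑ i ∈ Finset.range (n + 1 - k), F i j := FA (n+1-k) j
          rw [← hA2, hsub]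
          field_simp
          ring
        rw [Finset.mul_sum, Finset.sum_congr rfl hsplit, Finset.sum_add_distrib]
        have h1 : ∑ k ∈ Finset.Icc 1 (n+1), F (n + 1 - k) (j + 1)
            = ∑ m ∈ Finset.range (n+1), F m (j+1) := by
          refine Finset.sum_nbij' (fun k => n + 1 - k) (fun m => n + 1 - m) ?_ ?_ ?_ ?_ ?_ <;>
            (intro a ha; simp only [Finset.mem_Icc, Finset.mem_range] at ha ⊢) <;>
            first
            | omega
            | (congr 1; omega)
        have h2 : ∑ k ∈ Finset.Icc 1 (n+1), (∑ i ∈ Finset.range (n + 1 - k), F i j) / k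
            = ((j:ℝ) + 1) * ∑ m ∈ Finset.range (n+1), F m (j+1) := by
          have := sum_swap_aux n (fun i k => F i j / k)
          simp only [← Finset.sum_div] at this
          rw [this]
          rw [Finset.mul_sum]
          refine Finset.sum_congr rfl ?_
          intro m _
          exact (ih m).symm
        rw [h1, h2]
        linear_combination ((j:ℝ) + 1 + 1) * hA
      have := mul_left_cancel₀ hn1 key
      convert this using 2 <;> push_cast <;> ring


lemma conv_singleton (ν μ : Measure ℕ) [SFinite ν] [SFinite μ] (n : ℕ) :
    ν.conv μ {n} = ∑ k ∈ Finset.range (n + 1), ν {n - k} * μ {k} := by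
  rw [Measure.conv, Measure.map_apply (by fun_prop) (measurableSet_singleton n)]
  have hset : (fun x : ℕ × ℕ => x.1 + x.2) ⁻¹' {n}
      = ⋃ k ∈ Finset.range (n + 1), ({n - k} ×ˢ {k} : Set (ℕ × ℕ)) := by
    ext ⟨a, b⟩
    simp only [Set.mem_preimage, Set.mem_singleton_iff, Set.mem_iUnion, Finset.mem_range,
      Set.mem_prod, Set.mem_singleton_iff]
    constructor
    · rintro rfl; exact ⟨b, by omega, by omega, rfl⟩
    · rintro ⟨k, hk, rfl, rfl⟩; omega
  rw [hset, measure_biUnion_finset]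
  · exact Finset.sum_congr rfl fun k _ => Measure.prod_prod _ _
  · intro i hi j hj hij
    simp only [Function.onFun]
    rw [Set.disjoint_left]
    rintro ⟨a, b⟩ hab hab'
    simp only [Set.mem_prod, Set.mem_singleton_iff] at hab hab'
    exact hij (hab.2.symm.trans hab'.2)
  · intro k _
    exact (measurableSet_singleton _).prod (measurableSet_singleton _)


/-- `j`-fold (additive) convolution power of a measure on `ℕ`, with the `0`-th power the
Dirac mass at `0`. -/
noncomputable def convPow (μ : Measure ℕ) : ℕ → Measure ℕ
  | 0 => Measure.dirac 0
  | j + 1 => Measure.conv (convPow μ j) μ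

lemma convPow_isProb (μ : Measure ℕ) [IsProbabilityMeasure μ] :
    ∀ j, IsProbabilityMeasure (convPow μ j)
  | 0 => by rw [convPow]; infer_instance
  | (j + 1) => by
      rw [convPow]
      haveI := convPow_isProb μ j
      infer_instance

/-- For `0 < p < 1`, the `j`-fold convolution power of the logarithmic distribution `Log(p)`
(the probability measure on `ℕ` supported on the positive integers with
`μ {k} = -p^k/(k ln(1-p))` for `k ≥ 1`) satisfies
`μ^{*j} {n} = F(n,j) p^n j! / (-ln(1-p))^j`. -/
theorem convPow_logDist_singleton (p : ℝ) (hp0 : 0 < p) (hp1 : p < 1)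
    (μ : Measure ℕ) [IsProbabilityMeasure μ]
    (hμ0 : μ {0} = 0)
    (hμ : ∀ k : ℕ, 1 ≤ k → μ {k} = ENNReal.ofReal (-p ^ k / ((k : ℝ) * Real.log (1 - p))))
    (j n : ℕ) :
    convPow μ j {n} =
      ENNReal.ofReal (F n j * p ^ n * (j.factorial : ℝ) / (-Real.log (1 - p)) ^ j) := by
  set L : ℝ := -Real.log (1 - p) with hLdef
  have hlog : Real.log (1 - p) < 0 := Real.log_neg (by linarith) (by linarith)
  have hL : 0 < L := by simp only [hLdef]; linarith
  induction j generalizing n with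
  | zero =>
    rw [convPow]
    cases n with
    | zero =>
      rw [Measure.dirac_apply_of_mem (show (0:ℕ) ∈ ({0} : Set ℕ) from rfl)]
      norm_num [F]
    | succ n =>
      rw [Measure.dirac_apply]
      have h1 : (0 : ℕ) ∉ ({n + 1} : Set ℕ) := by simp
      have h2 : F (n + 1) 0 = 0 := by simp [F_zero_right]
      simp [Set.indicator_of_notMem h1, h2]
  | succ j ih =>
    haveI := convPow_isProb μ j
    rw [convPow, conv_singleton]
    have hins : Finset.range (n + 1) = insert 0 (Finset.Icc 1 n) := by
      ext x; simp only [Finset.mem_range, Finset.mem_insert, Finset.mem_Icc]; omega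
    rw [hins, Finset.sum_insert (by simp)]
    rw [hμ0, mul_zero, zero_add]
    have hterm : ∀ k ∈ Finset.Icc 1 n,
        convPow μ j {n - k} * μ {k}
          = ENNReal.ofReal ((F (n - k) j / k) * (p ^ n * (j.factorial : ℝ) / L ^ (j + 1))) := by
      intro k hk
      simp only [Finset.mem_Icc] at hk
      obtain ⟨hk1, hkn⟩ := hk
      have hk0 : (0 : ℝ) < k := by exact_mod_cast hk1
      rw [ih, hμ k hk1]
      rw [← ENNReal.ofReal_mul (by have := F_nonneg (n - k) j; positivity)]
      congr 1
      have hμk : -p ^ k / ((k : ℝ) * Real.log (1 - p)) = p ^ k / ((k : ℝ) * L) := by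
        rw [hLdef]; field_simp
      rw [hμk]
      have hp : p ^ (n - k) * p ^ k = p ^ n := by
        rw [← pow_add]; congr 1; omega
      calc F (n - k) j * p ^ (n - k) * (j.factorial : ℝ) / L ^ j * (p ^ k / ((k : ℝ) * L))
          = (F (n - k) j / k) * ((p ^ (n - k) * p ^ k) * (j.factorial : ℝ) / (L ^ j * L)) := by
            field_simp
        _ = (F (n - k) j / k) * (p ^ n * (j.factorial : ℝ) / L ^ (j + 1)) := by
            rw [hp, pow_succ]
    rw [Finset.sum_congr rfl hterm]
    have hnn : ∀ k ∈ Finset.Icc 1 n,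
        0 ≤ (F (n - k) j / k) * (p ^ n * (j.factorial : ℝ) / L ^ (j + 1)) := by
      intro k hk
      simp only [Finset.mem_Icc] at hk
      have hk0 : (0 : ℝ) < k := by exact_mod_cast hk.1
      have := F_nonneg (n - k) j
      positivity
    rw [← ENNReal.ofReal_sum_of_nonneg hnn]
    congr 1
    rw [← Finset.sum_mul, ← FC j n]
    rw [Nat.factorial_succ]
    push_cast
    ring
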